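/- arXiv:2012.09541 — 2 statements merged into one kernel-verified Lean document; each statement's English description precedes it below -/
import Mathlib

section
/- Let (W, M, s, m) be a hiring problem and k a parameter with k ≤ |W| and |M| ≥ ⌈m·k⌉. Then the Brazilian rule φ^B with parameter k is aggregation independent and respects minority rights: (i) for all quotas q ≥ q₁ ≥ 0 with m·q₁ and m·q integers, and any set A of workers previously hired by φ^B with |A| + q ≤ k, φ^B hiring q workers at once selects the same workers as hiring q₁ and then q − q₁; and (ii) for every sequence of hires λ = ⟨q₁,…,q_t⟩ with m·q_r an integer for each r and q₁+⋯+q_t ≤ k, the set φ^B(W,λ) respects minority rights for quota q₁+⋯+q_t. -/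
open Finset

variable {ι : Type*} [DecidableEq ι]

/-- The (up to) `k` highest-scoring elements of `X`, chosen greedily
(with injective scores this is the set of the `k` highest-scoring elements). -/
noncomputable def topOf (s : ι → ℝ) : ℕ → Finset ι → Finset ι
  | 0, _ => ∅
  | k + 1, X =>
    if h : X.Nonempty then
      insert (X.exists_max_image s h).choose
        (topOf s k (X.erase (X.exists_max_image s h).choose))
    else ∅

/-- `H` respects minority rights for quota `q` (w.r.t. minorities `M` and ratio `m`):
either `|M| ≥ m·q` and the fraction of minorities in `H` is at least `m`
(stated multiplicatively as `ω(H) ≥ m·|H|`), or `|M| < m·q` and `M ⊆ H`. -/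
def RespectsRightsSet (M : Finset ι) (m : ℝ) (q : ℕ) (H : Finset ι) : Prop :=
  (m * (q : ℝ) ≤ (M.card : ℝ) ∧ m * (H.card : ℝ) ≤ ((H ∩ M).card : ℝ)) ∨
  ((M.card : ℝ) < m * (q : ℝ) ∧ M ⊆ H)

/-- `H` is minority fair (w.r.t. workers `W`, minorities `M`, scores `s`, ratio `m`):
(i) within `M` and within `W ∖ M` selection follows the scores; (ii) no minority with a
higher score is left out while a non-minority is hired; (iii) a lower-scoring minority is
hired over a higher-scoring non-minority only if the minority fraction of `H` is at most
`m` (stated multiplicatively as `ω(H) ≤ m·|H|`). -/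
def MinorityFairSet (W M : Finset ι) (s : ι → ℝ) (m : ℝ) (H : Finset ι) : Prop :=
  (∀ w ∈ M, ∀ w' ∈ M, w ∈ H → w' ∉ H → s w' < s w) ∧
  (∀ w ∈ W \ M, ∀ w' ∈ W \ M, w ∈ H → w' ∉ H → s w' < s w) ∧
  (∀ w ∈ W \ M, ∀ w' ∈ M, s w < s w' → w ∈ H → w' ∈ H) ∧
  ((∃ w ∈ W \ M, ∃ w' ∈ M, s w' < s w ∧ w ∉ H ∧ w' ∈ H) →
    ((H ∩ M).card : ℝ) ≤ m * (H.card : ℝ))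

/-- Auxiliary recursion for the Brazilian rule: `TM` and `O` are the two fixed groups,
`A` is the set of workers hired in earlier rounds.  In a round with quota `q`, the
`⌈m·q⌉` highest-scoring not-yet-hired workers of `TM` and the `q − ⌈m·q⌉`
highest-scoring not-yet-hired workers of `O` are hired. -/
noncomputable def phiBaux (s : ι → ℝ) (m : ℝ) (TM O : Finset ι) :
    Finset ι → List ℕ → Finset ι
  | _, [] => ∅
  | A, q :: rest =>
    let H := topOf s ⌈m * (q : ℝ)⌉₊ (TM \ A) ∪ topOf s (q - ⌈m * (q : ℝ)⌉₊) (O \ A)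
    H ∪ phiBaux s m TM O (A ∪ H) rest

/-- The Brazilian rule `φ^B` with parameter `k`: first form `TM`, the `⌈m·k⌉`
highest-scoring workers of `M`, and `O`, the `k − ⌈m·k⌉` highest-scoring workers of
`W ∖ TM`; then hire round by round from `TM` and `O`, starting from the set `A` of
previously hired workers. -/
noncomputable def phiB (W M : Finset ι) (s : ι → ℝ) (m : ℝ) (k : ℕ)
    (A : Finset ι) (lam : List ℕ) : Finset ι :=
  phiBaux s m (topOf s ⌈m * (k : ℝ)⌉₊ M)
    (topOf s (k - ⌈m * (k : ℝ)⌉₊) (W \ topOf s ⌈m * (k : ℝ)⌉₊ M)) A lam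

/-!
Since `TM` and `O` are disjoint and greedy selection is prefix-closed (`topOf_add`), the workers
hired over any sequence of rounds are the top `Σ ⌈m·q_r⌉` workers of `TM` together with the top
`Σ (q_r − ⌈m·q_r⌉)` workers of `O`: the outcome depends on the rounds only through these two
totals. When every `m·q_r` is an integer the first total is `m·Σ q_r`, which is additive in the
rounds; this gives aggregation independence. Moreover those `m·Σ q_r` hires from `TM` are all
minorities, while at most `Σ q_r` workers are hired, so minority rights are respected.
-/

section TopOf

variable (s : ι → ℝ)

lemma topOf_subset (n : ℕ) (X : Finset ι) : topOf s n X ⊆ X := by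
  induction n generalizing X with
  | zero => simp [topOf]
  | succ k ih =>
    by_cases h : X.Nonempty
    · rw [topOf, dif_pos h]
      exact insert_subset (X.exists_max_image s h).choose_spec.1 ((ih _).trans (erase_subset _ _))
    · simp [topOf, h]

lemma card_topOf_le (n : ℕ) (X : Finset ι) : (topOf s n X).card ≤ n := by
  induction n generalizing X with
  | zero => simp [topOf]
  | succ k ih =>
    by_cases h : X.Nonempty
    · rw [topOf, dif_pos h]
      exact (card_insert_le _ _).trans (Nat.succ_le_succ (ih _))
    · simp [topOf, h]

lemma card_topOf {n : ℕ} {X : Finset ι} (hn : n ≤ X.card) : (topOf s n X).card = n := by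
  induction n generalizing X with
  | zero => simp [topOf]
  | succ k ih =>
    have h : X.Nonempty := card_pos.mp (by omega)
    obtain ⟨hx, -⟩ := (X.exists_max_image s h).choose_spec
    have hnot : (X.exists_max_image s h).choose ∉
        topOf s k (X.erase (X.exists_max_image s h).choose) :=
      fun hc => (mem_erase.mp (topOf_subset s _ _ hc)).1 rfl
    rw [topOf, dif_pos h, card_insert_of_notMem hnot, ih (by rw [card_erase_of_mem hx]; omega)]

lemma topOf_add (a b : ℕ) (X : Finset ι) :
    topOf s (a + b) X = topOf s a X ∪ topOf s b (X \ topOf s a X) := by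
  induction a generalizing X with
  | zero => simp [topOf]
  | succ k ih =>
    by_cases h : X.Nonempty
    · have hsdiff : ∀ T : Finset ι, X \ insert (X.exists_max_image s h).choose T =
          (X.erase (X.exists_max_image s h).choose) \ T := by
        intro T; ext w
        simp only [mem_sdiff, mem_erase, mem_insert, not_or]
        tauto
      rw [Nat.add_right_comm, topOf, dif_pos h, topOf, dif_pos h, ih, hsdiff, insert_union]
    · obtain rfl := not_nonempty_iff_eq_empty.mp h
      cases b <;> simp [topOf]

end TopOf

noncomputable def tmHires (m : ℝ) (lam : List ℕ) : ℕ := (lam.map fun q : ℕ => ⌈m * (q : ℝ)⌉₊).sum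

noncomputable def oHires (m : ℝ) (lam : List ℕ) : ℕ := (lam.map fun q : ℕ => q - ⌈m * (q : ℝ)⌉₊).sum

section Hires

variable {m : ℝ}

lemma tmHires_add_oHires (hm1 : m ≤ 1) (lam : List ℕ) :
    tmHires m lam + oHires m lam = lam.sum := by
  induction lam with
  | nil => simp [tmHires, oHires]
  | cons q rest ih =>
    have hq : ⌈m * (q : ℝ)⌉₊ ≤ q :=
      Nat.ceil_le.mpr (mul_le_of_le_one_left q.cast_nonneg hm1)
    simp only [tmHires, oHires, List.map_cons, List.sum_cons] at ih ⊢
    omega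

lemma cast_tmHires {lam : List ℕ} (hint : ∀ q ∈ lam, ∃ j : ℕ, m * (q : ℝ) = (j : ℝ)) :
    (tmHires m lam : ℝ) = m * lam.sum := by
  induction lam with
  | nil => simp [tmHires]
  | cons q rest ih =>
    obtain ⟨j, hj⟩ := hint q List.mem_cons_self
    have ih := ih fun r hr => hint r (List.mem_cons_of_mem _ hr)
    simp only [tmHires, List.map_cons, List.sum_cons] at ih ⊢
    rw [Nat.cast_add, Nat.cast_add, ih, mul_add, hj, Nat.ceil_natCast]

lemma tmHires_pair (hm0 : 0 ≤ m) {q q₁ j j₁ : ℕ} (hq : q₁ ≤ q)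
    (h₁ : m * (q₁ : ℝ) = j₁) (h : m * (q : ℝ) = j) :
    tmHires m [q₁, q - q₁] = tmHires m [q] := by
  have hj : j₁ ≤ j := by
    exact_mod_cast h₁ ▸ h ▸ mul_le_mul_of_nonneg_left (Nat.cast_le.mpr hq) hm0
  have hsub : m * ((q - q₁ : ℕ) : ℝ) = ((j - j₁ : ℕ) : ℝ) := by
    rw [Nat.cast_sub hq, Nat.cast_sub hj, mul_sub, h, h₁]
  simp only [tmHires, List.map_cons, List.map_nil, List.sum_cons, List.sum_nil, h, h₁, hsub,
    Nat.ceil_natCast]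
  omega

end Hires

section PhiBaux

variable {s : ι → ℝ} {m : ℝ} {TM O : Finset ι}

lemma disjoint_phiBaux (lam : List ℕ) (A : Finset ι) : Disjoint A (phiBaux s m TM O A lam) := by
  induction lam generalizing A with
  | nil => simp [phiBaux]
  | cons q rest ih =>
    rw [phiBaux]
    refine disjoint_union_right.mpr ⟨disjoint_union_right.mpr ⟨?_, ?_⟩, ?_⟩
    · exact disjoint_sdiff.mono_right (topOf_subset _ _ _)
    · exact disjoint_sdiff.mono_right (topOf_subset _ _ _)
    · exact (ih _).mono_left subset_union_left

lemma union_phiBaux_topOf (hTMO : Disjoint TM O) (lam : List ℕ) (a b : ℕ) :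
    (topOf s a TM ∪ topOf s b O) ∪ phiBaux s m TM O (topOf s a TM ∪ topOf s b O) lam =
      topOf s (a + tmHires m lam) TM ∪ topOf s (b + oHires m lam) O := by
  induction lam generalizing a b with
  | nil => simp [phiBaux, tmHires, oHires]
  | cons q rest ih =>
    have hTM : TM \ (topOf s a TM ∪ topOf s b O) = TM \ topOf s a TM := by
      rw [sdiff_union_distrib, (hTMO.mono_right (topOf_subset s b O)).sdiff_eq_left,
        inter_eq_left.mpr sdiff_subset]
    have hO : O \ (topOf s a TM ∪ topOf s b O) = O \ topOf s b O := by
      rw [sdiff_union_distrib, (hTMO.symm.mono_right (topOf_subset s a TM)).sdiff_eq_left,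
        inter_eq_right.mpr sdiff_subset]
    have hround : (topOf s a TM ∪ topOf s b O) ∪
        (topOf s ⌈m * (q : ℝ)⌉₊ (TM \ (topOf s a TM ∪ topOf s b O)) ∪
          topOf s (q - ⌈m * (q : ℝ)⌉₊) (O \ (topOf s a TM ∪ topOf s b O))) =
        topOf s (a + ⌈m * (q : ℝ)⌉₊) TM ∪ topOf s (b + (q - ⌈m * (q : ℝ)⌉₊)) O := by
      rw [hTM, hO, topOf_add s a, topOf_add s b]
      ac_rfl
    rw [phiBaux, ← union_assoc, hround, ih]
    simp only [tmHires, oHires, List.map_cons, List.sum_cons, Nat.add_assoc]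

lemma phiBaux_empty (hTMO : Disjoint TM O) (lam : List ℕ) :
    phiBaux s m TM O ∅ lam = topOf s (tmHires m lam) TM ∪ topOf s (oHires m lam) O := by
  simpa [topOf] using union_phiBaux_topOf (s := s) (m := m) hTMO lam 0 0

lemma phiBaux_topOf_congr (hm1 : m ≤ 1) (hTMO : Disjoint TM O) {lam lam' : List ℕ}
    (hsum : lam.sum = lam'.sum) (htm : tmHires m lam = tmHires m lam') (a b : ℕ) :
    phiBaux s m TM O (topOf s a TM ∪ topOf s b O) lam =
      phiBaux s m TM O (topOf s a TM ∪ topOf s b O) lam' := by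
  have ho : oHires m lam = oHires m lam' := by
    have := tmHires_add_oHires hm1 lam
    have := tmHires_add_oHires hm1 lam'
    omega
  rw [← union_sdiff_cancel_left (disjoint_phiBaux lam _), union_phiBaux_topOf hTMO, htm, ho,
    ← union_phiBaux_topOf hTMO, union_sdiff_cancel_left (disjoint_phiBaux lam' _)]

end PhiBaux

lemma respectsRightsSet_of_subset {M T H : Finset ι} {m : ℝ} {q : ℕ} (hm0 : 0 ≤ m)
    (hTH : T ⊆ H) (hTM : T ⊆ M) (hH : H.card ≤ q) (hT : m * q ≤ T.card) :
    RespectsRightsSet M m q H := by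
  have hTHM : (T.card : ℝ) ≤ (H ∩ M).card := by exact_mod_cast card_le_card (subset_inter hTH hTM)
  have hTMc : (T.card : ℝ) ≤ M.card := by exact_mod_cast card_le_card hTM
  refine Or.inl ⟨hT.trans hTMc, ?_⟩
  calc m * (H.card : ℝ) ≤ m * q := mul_le_mul_of_nonneg_left (by exact_mod_cast hH) hm0
    _ ≤ _ := hT.trans hTHM

lemma respectsRightsSet_phiBaux {s : ι → ℝ} {m : ℝ} {M TM O : Finset ι} (hm0 : 0 ≤ m)
    (hm1 : m ≤ 1) (hTMO : Disjoint TM O) (hTM : TM ⊆ M) {lam : List ℕ}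
    (hint : ∀ q ∈ lam, ∃ j : ℕ, m * (q : ℝ) = (j : ℝ)) (hcap : m * lam.sum ≤ TM.card) :
    RespectsRightsSet M m lam.sum (phiBaux s m TM O ∅ lam) := by
  have hcard : (topOf s (tmHires m lam) TM).card = tmHires m lam :=
    card_topOf s (by exact_mod_cast (cast_tmHires hint).trans_le hcap)
  rw [phiBaux_empty hTMO]
  refine respectsRightsSet_of_subset hm0 subset_union_left ((topOf_subset _ _ _).trans hTM) ?_
    (by rw [hcard, cast_tmHires hint])
  calc _ ≤ (topOf s (tmHires m lam) TM).card + (topOf s (oHires m lam) O).card := card_union_le _ _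
    _ ≤ tmHires m lam + oHires m lam := add_le_add (card_topOf_le _ _ _) (card_topOf_le _ _ _)
    _ = lam.sum := tmHires_add_oHires hm1 lam

theorem phiB_aggindep_and_rights_general (W M : Finset ι) (s : ι → ℝ) (m : ℝ) (k : ℕ)
    (hm0 : 0 ≤ m) (hm1 : m ≤ 1)
    (hMk : ⌈m * (k : ℝ)⌉₊ ≤ M.card) :
    (∀ (q q₁ : ℕ) (A : Finset ι), q₁ ≤ q →
      (∃ j : ℕ, m * (q₁ : ℝ) = (j : ℝ)) → (∃ j : ℕ, m * (q : ℝ) = (j : ℝ)) →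
      (∃ lam₀ : List ℕ, A = phiB W M s m k ∅ lam₀) → A.card + q ≤ k →
      phiB W M s m k A [q] = phiB W M s m k A [q₁, q - q₁]) ∧
    (∀ lam : List ℕ, (∀ q ∈ lam, ∃ j : ℕ, m * (q : ℝ) = (j : ℝ)) → lam.sum ≤ k →
      RespectsRightsSet M m lam.sum (phiB W M s m k ∅ lam)) := by
  unfold phiB
  set TM := topOf s ⌈m * (k : ℝ)⌉₊ M
  set O := topOf s (k - ⌈m * (k : ℝ)⌉₊) (W \ TM)
  have hTMO : Disjoint TM O := disjoint_sdiff.mono_right (topOf_subset _ _ _)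
  refine ⟨?_, fun lam hint hsum => ?_⟩
  · rintro q q₁ A hq ⟨j₁, h₁⟩ ⟨j, h⟩ ⟨lam₀, rfl⟩ -
    rw [phiBaux_empty hTMO]
    exact phiBaux_topOf_congr hm1 hTMO (by simp [Nat.add_sub_cancel' hq])
      (tmHires_pair hm0 hq h₁ h).symm _ _
  · refine respectsRightsSet_phiBaux hm0 hm1 hTMO (topOf_subset _ _ _) hint ?_
    calc m * lam.sum ≤ m * k := mul_le_mul_of_nonneg_left (by exact_mod_cast hsum) hm0
      _ ≤ ⌈m * (k : ℝ)⌉₊ := Nat.le_ceil _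
      _ = TM.card := by rw [card_topOf s hMk]

/-- Let `(W, M, s, m)` be a hiring problem and `k` a parameter with
`k ≤ |W|` and `|M| ≥ ⌈m·k⌉`.  Then the Brazilian rule `φ^B` with parameter `k` is
aggregation independent and respects minority rights: (i) for all quotas `q ≥ q₁ ≥ 0`
with `m·q₁` and `m·q` integers, and any set `A` of workers previously hired by `φ^B`
with `|A| + q ≤ k`, hiring `q` workers at once selects the same workers as hiring `q₁`
and then `q − q₁`; and (ii) for every sequence of hires `λ = ⟨q₁,…,q_t⟩` with `m·q_r` an
integer for each `r` and `q₁+⋯+q_t ≤ k`, the set `φ^B(W,λ)` respects minority rights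
for quota `q₁+⋯+q_t`. -/
theorem phiB_aggindep_and_rights (W M : Finset ι) (s : ι → ℝ) (m : ℝ) (k : ℕ)
    (hMW : M ⊆ W) (hs : Set.InjOn s ↑W) (hm0 : 0 ≤ m) (hm1 : m ≤ 1)
    (hk : k ≤ W.card) (hMk : ⌈m * (k : ℝ)⌉₊ ≤ M.card) :
    (∀ (q q₁ : ℕ) (A : Finset ι), q₁ ≤ q →
      (∃ j : ℕ, m * (q₁ : ℝ) = (j : ℝ)) → (∃ j : ℕ, m * (q : ℝ) = (j : ℝ)) →
      (∃ lam₀ : List ℕ, A = phiB W M s m k ∅ lam₀) → A.card + q ≤ k →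
      phiB W M s m k A [q] = phiB W M s m k A [q₁, q - q₁]) ∧
    (∀ lam : List ℕ, (∀ q ∈ lam, ∃ j : ℕ, m * (q : ℝ) = (j : ℝ)) → lam.sum ≤ k →
      RespectsRightsSet M m lam.sum (phiB W M s m k ∅ lam)) :=
  phiB_aggindep_and_rights_general W M s m k hm0 hm1 hMk
end

section
/- Policy 1 of the French assignment rule does not respect minority rights and is not aggregation independent: (i) there exist a finite set of workers W, a subset M ⊆ W, an injective score function s, a minority ratio m with 0 ≤ m ≤ 1, and a quota q ≤ |W| with m·q an integer, such that the set φ^F1(W,⟨q⟩) does not respect minority rights for quota q; and (ii) there exist W, M, s, m and quotas q₁, q₂ with q₁+q₂ ≤ |W| and m·q₁, m·(q₁+q₂) integers, such that φ^F1(W,⟨q₁,q₂⟩) ≠ φ^F1(W,⟨q₁+q₂⟩). -/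
open Finset

variable {ι : Type*} [DecidableEq ι]

/-- One round of the adjusted minority reserves choice from pool `P`: `hired` is the
number of minority workers hired in earlier rounds, `Q` is the cumulative quota up to and
including this round, and `q` is the quota of this round.  First the
`min(max(⌈m·Q⌉ − hired, 0), |M ∩ P|)` highest-scoring available minority workers are
hired, then the highest-scoring remaining available workers fill up to `q` hires. -/
noncomputable def saRound (M : Finset ι) (s : ι → ℝ) (m : ℝ) (P : Finset ι)
    (hired Q q : ℕ) : Finset ι :=
  let A1 := topOf s (min (⌈m * (Q : ℝ)⌉₊ - hired) (P ∩ M).card) (P ∩ M)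
  A1 ∪ topOf s (q - A1.card) (P \ A1)

/-- Auxiliary recursion for the sequential adjusted minority reserves rule:
`P` is the current pool, `A` the set of previously hired workers and `Q` the cumulative
quota of previous rounds. -/
noncomputable def phiSAaux (M : Finset ι) (s : ι → ℝ) (m : ℝ) :
    Finset ι → Finset ι → ℕ → List ℕ → Finset ι
  | _, _, _, [] => ∅
  | P, A, Q, q :: rest =>
    let H := saRound M s m P ((A ∩ M).card) (Q + q) q
    H ∪ phiSAaux M s m (P \ H) (A ∪ H) (Q + q) rest

/-- The sequential adjusted minority reserves rule `φ^SA`. -/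
noncomputable def phiSA (M : Finset ι) (s : ι → ℝ) (m : ℝ) (W : Finset ι)
    (lam : List ℕ) : Finset ι :=
  phiSAaux M s m W ∅ 0 lam

/-- Policy 1 of the French assignment rule `φ^F1` (under the assumption that all workers
with disabilities take part in the open competition with the same relative ranking, so a
single score function applies): in round 1 it hires the `q₁` highest-scoring workers of
`W`; in each later round with quota `q_r`, cumulative quota `Q_r` and previously hired
set `A`, it first hires the `min(max(⌈m·Q_r⌉ − ω(A), 0), available minorities)`
highest-scoring available minority workers and then fills the rest of the round with the
highest-scoring remaining available workers. -/
noncomputable def phiF1 (M : Finset ι) (s : ι → ℝ) (m : ℝ) (W : Finset ι) :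
    List ℕ → Finset ι
  | [] => ∅
  | q :: rest =>
    topOf s q W ∪ phiSAaux M s m (W \ topOf s q W) (topOf s q W) q rest

/-!
Both counterexamples score each worker by its index, have the single minority worker `0`
with the lowest score, and take `m = 1/2`. A one-round hiring under Policy 1 is a pure open
competition, so hiring two of `{0, 1, 2}` takes `1` and `2` and no minority worker although
`|M| = m·q`. With rounds `⟨2, 2⟩` on `{0, …, 4}` the second round reserves `⌈m·4⌉ = 2`
places for minority workers and so hires `0`, who is not among the four best hired by `⟨4⟩`.
-/

theorem topOf_zero (s : ι → ℝ) (X : Finset ι) : topOf s 0 X = ∅ := by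
  rw [topOf]

theorem topOf_succ_of_isMax {s : ι → ℝ} {k : ℕ} {X : Finset ι} {a : ι} (ha : a ∈ X)
    (hmax : ∀ b ∈ X, b ≠ a → s b < s a) :
    topOf s (k + 1) X = insert a (topOf s k (X.erase a)) := by
  have hne : X.Nonempty := ⟨a, ha⟩
  obtain ⟨hc, hcmax⟩ := (X.exists_max_image s hne).choose_spec
  have hca : (X.exists_max_image s hne).choose = a := by
    by_contra h
    exact (hmax _ hc h).not_ge (hcmax a ha)
  rw [topOf, dif_pos hne, hca]

theorem topOf_of_card_le (s : ι → ℝ) {k : ℕ} {X : Finset ι} (hk : X.card ≤ k) :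
    topOf s k X = X := by
  induction k generalizing X with
  | zero => rw [topOf_zero, card_eq_zero.mp (Nat.le_zero.mp hk)]
  | succ k ih =>
    rcases X.eq_empty_or_nonempty with rfl | hne
    · rw [topOf, dif_neg Finset.not_nonempty_empty]
    have hc := (X.exists_max_image s hne).choose_spec.1
    rw [topOf, dif_pos hne, ih (by rw [card_erase_of_mem hc]; omega), insert_erase hc]

theorem topOf_Ico {s : ℕ → ℝ} (hs : StrictMono s) {a b k : ℕ} (hk : k ≤ b - a) :
    topOf s k (Ico a b) = Ico (b - k) b := by
  induction k generalizing b with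
  | zero => simp [topOf_zero]
  | succ k ih =>
    obtain ⟨c, rfl⟩ : ∃ c, b = c + 1 := ⟨b - 1, by omega⟩
    have hmax : ∀ x ∈ Ico a (c + 1), x ≠ c → s x < s c := fun x hx _ =>
      hs (by simp at hx; omega)
    have herase : (Ico a (c + 1)).erase c = Ico a c := by
      rw [← Nat.succ_eq_add_one, Nat.Ico_succ_right_eq_insert_Ico (by omega),
        erase_insert (by simp)]
    rw [topOf_succ_of_isMax (by simp; omega) hmax, herase, ih (by omega),
      show c + 1 - (k + 1) = c - k by omega, ← Nat.Ico_succ_right_eq_insert_Ico (by omega)]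

theorem phiF1_singleton (M : Finset ι) (s : ι → ℝ) (m : ℝ) (W : Finset ι) (q : ℕ) :
    phiF1 M s m W [q] = topOf s q W := by
  rw [phiF1, phiSAaux, union_empty]

theorem phiF1_pair (M : Finset ι) (s : ι → ℝ) (m : ℝ) (W : Finset ι) (q₁ q₂ : ℕ) :
    phiF1 M s m W [q₁, q₂] = topOf s q₁ W ∪
      saRound M s m (W \ topOf s q₁ W) ((topOf s q₁ W ∩ M).card) (q₁ + q₂) q₂ := by
  rw [phiF1, phiSAaux, phiSAaux, union_empty]

theorem saRound_of_card_inter_le {M : Finset ι} {s : ι → ℝ} {m : ℝ} {P : Finset ι}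
    {hired Q q : ℕ} (h : (P ∩ M).card ≤ ⌈m * (Q : ℝ)⌉₊ - hired) :
    saRound M s m P hired Q q = P ∩ M ∪ topOf s (q - (P ∩ M).card) (P \ M) := by
  rw [saRound, min_eq_right h, topOf_of_card_le s le_rfl, sdiff_inter_self_left]

theorem not_respectsRightsSet_of_disjoint {M : Finset ι} {m : ℝ} {q : ℕ} {H : Finset ι}
    (hq : m * q ≤ M.card) (hm : 0 < m) (hH : H.Nonempty) (hdisj : Disjoint H M) :
    ¬ RespectsRightsSet M m q H := by
  have hpos : 0 < m * (H.card : ℝ) := mul_pos hm (by exact_mod_cast hH.card_pos)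
  rintro (⟨-, hfrac⟩ | ⟨hlt, -⟩)
  · rw [disjoint_iff_inter_eq_empty.mp hdisj, card_empty, Nat.cast_zero] at hfrac
    linarith
  · linarith

/-- Policy 1 of the French assignment rule does not respect minority
rights and is not aggregation independent: (i) there is a hiring problem and a quota
`q ≤ |W|` with `m·q` an integer such that `φ^F1(W,⟨q⟩)` does not respect minority rights
for quota `q`; and (ii) there is a hiring problem and quotas `q₁, q₂` with
`q₁+q₂ ≤ |W|` and `m·q₁`, `m·(q₁+q₂)` integers such that
`φ^F1(W,⟨q₁,q₂⟩) ≠ φ^F1(W,⟨q₁+q₂⟩)`. -/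
theorem phiF1_not_rights_not_aggindep :
    (∃ (W M : Finset ℕ) (s : ℕ → ℝ) (m : ℝ) (q : ℕ),
      M ⊆ W ∧ Set.InjOn s ↑W ∧ 0 ≤ m ∧ m ≤ 1 ∧ q ≤ W.card ∧
      (∃ j : ℕ, m * (q : ℝ) = (j : ℝ)) ∧
      ¬ RespectsRightsSet M m q (phiF1 M s m W [q])) ∧
    (∃ (W M : Finset ℕ) (s : ℕ → ℝ) (m : ℝ) (q₁ q₂ : ℕ),
      M ⊆ W ∧ Set.InjOn s ↑W ∧ 0 ≤ m ∧ m ≤ 1 ∧ q₁ + q₂ ≤ W.card ∧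
      (∃ j : ℕ, m * (q₁ : ℝ) = (j : ℝ)) ∧ (∃ j : ℕ, m * ((q₁ + q₂ : ℕ) : ℝ) = (j : ℝ)) ∧
      phiF1 M s m W [q₁, q₂] ≠ phiF1 M s m W [q₁ + q₂]) := by
  have hs : StrictMono (Nat.cast : ℕ → ℝ) := Nat.strictMono_cast
  constructor
  · refine ⟨range 3, {0}, (↑), 1 / 2, 2, by decide, Nat.cast_injective.injOn,
      by norm_num, by norm_num, by simp, ⟨1, by norm_num⟩, ?_⟩
    rw [phiF1_singleton, range_eq_Ico, topOf_Ico hs (by norm_num)]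
    exact not_respectsRightsSet_of_disjoint (by norm_num) (by norm_num) (by decide) (by decide)
  · refine ⟨range 5, {0}, (↑), 1 / 2, 2, 2, by decide, Nat.cast_injective.injOn,
      by norm_num, by norm_num, by simp, ⟨1, by norm_num⟩, ⟨2, by norm_num⟩, ?_⟩
    have hceil : ⌈(1 / 2 : ℝ) * ((2 + 2 : ℕ) : ℝ)⌉₊ = 2 := by norm_num
    rw [phiF1_pair, phiF1_singleton, range_eq_Ico, topOf_Ico hs (by norm_num),
      topOf_Ico hs (by norm_num), Ico_sdiff_Ico_right,
      saRound_of_card_inter_le (by rw [hceil]; decide)]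
    intro h
    have h0 : (0 : ℕ) ∈ Ico (5 - (2 + 2)) 5 := h ▸ by simp
    simp at h0
end
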